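/- arXiv:2510.20232 — 4 statements merged into one kernel-verified Lean document; each statement's English description precedes it below -/
import Mathlib

section
/- Let m be a nonzero integer such that X^3 − m is irreducible over ℚ, α a root and K = ℚ(α). Then O_K = ℤ[α] if and only if m is square-free and m is not congruent to 1 or −1 modulo 9. -/
open Polynomial Algebra

namespace PureCubicAux

variable {K : Type} [Field K] [NumberField K]

lemma isInt (m : ℤ) (α : K) (hroot : α ^ 3 = (m : K)) : IsIntegral ℤ α :=
  ⟨X ^ 3 - C m, (monic_X_pow_sub_C m (by norm_num)),
    by rw [eval₂_sub, eval₂_pow, eval₂_X, eval₂_C, hroot]; simp⟩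

lemma minpolyQ (m : ℤ) (hirr : Irreducible ((X : ℚ[X]) ^ 3 - C (m : ℚ))) (α : K)
    (hroot : α ^ 3 = (m : K)) : minpoly ℚ α = (X : ℚ[X]) ^ 3 - C (m : ℚ) :=
  (minpoly.eq_of_irreducible_of_monic hirr (by simp [hroot])
    (monic_X_pow_sub_C _ (by norm_num))).symm

lemma minpolyZ (m : ℤ) (hirr : Irreducible ((X : ℚ[X]) ^ 3 - C (m : ℚ))) (α : K)
    (hroot : α ^ 3 = (m : K)) : minpoly ℤ α = (X : ℤ[X]) ^ 3 - C m := by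
  have h := minpoly.isIntegrallyClosed_eq_field_fractions' ℚ (isInt m α hroot)
  rw [minpolyQ m hirr α hroot] at h
  apply Polynomial.map_injective (algebraMap ℤ ℚ) (fun a b hab => by exact_mod_cast hab)
  rw [← h]
  simp

noncomputable def pb (α : K) (hint : IsIntegral ℚ α)
    (hgen : Algebra.adjoin ℚ {α} = ⊤) : PowerBasis ℚ K :=
  (Algebra.adjoin.powerBasis hint).map
    ((Subalgebra.equivOfEq _ _ hgen).trans Subalgebra.topEquiv)

@[simp] lemma pb_gen (α : K) (hint : IsIntegral ℚ α) (hgen : Algebra.adjoin ℚ {α} = ⊤) :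
    (pb α hint hgen).gen = α := by
  simp [pb]

lemma pb_dim (α : K) (hint : IsIntegral ℚ α) (hgen : Algebra.adjoin ℚ {α} = ⊤) :
    (pb α hint hgen).dim = (minpoly ℚ α).natDegree := by
  simp [pb]

lemma coord_pow (α : K) (B : PowerBasis ℚ K) (hBgen : B.gen = α) (i : Fin B.dim)
    (hi : (i : ℕ) = 2) (j : ℕ) (hj : j < B.dim) :
    B.basis.coord i (α ^ j) = if j = 2 then 1 else 0 := by
  have h1 : α ^ j = B.basis ⟨j, hj⟩ := by simp [PowerBasis.coe_basis, hBgen]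
  rw [h1, Module.Basis.coord_apply, B.basis.repr_self, Finsupp.single_apply]
  congr 1
  simp only [Fin.ext_iff, hi, eq_iff_iff]

lemma coord_int (m : ℤ) (α : K) (hroot : α ^ 3 = (m : K))
    (B : PowerBasis ℚ K) (hBgen : B.gen = α) (i : Fin B.dim) (hi : (i : ℕ) = 2)
    {x : K} (hx : x ∈ Algebra.adjoin ℤ ({α} : Set K)) :
    ∃ k : ℤ, B.basis.coord i x = (k : ℚ) := by
  rw [Algebra.adjoin_singleton_eq_range_aeval] at hx
  obtain ⟨P, hP⟩ := hx
  set g : ℤ[X] := X ^ 3 - C m with hg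
  have hgm : g.Monic := monic_X_pow_sub_C m (by norm_num)
  have hgα : aeval α g = 0 := by
    rw [hg]; rw [map_sub, map_pow, aeval_X, aeval_C, hroot]; simp
  have key : aeval α P = aeval α (P %ₘ g) := by
    conv_lhs => rw [← modByMonic_add_div P g]
    rw [map_add, map_mul, hgα, zero_mul, add_zero]
  have hdeg : (P %ₘ g).natDegree < 3 := by
    by_cases h0 : P %ₘ g = 0
    · simp [h0]
    · have := degree_modByMonic_lt P hgm
      rw [hg, degree_X_pow_sub_C (by norm_num)] at this
      exact natDegree_lt_iff_degree_lt h0 |>.2 (by exact_mod_cast this)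
  set r := P %ₘ g with hr
  have hsum : aeval α r = r.coeff 0 • (α ^ 0) + r.coeff 1 • (α ^ 1) + r.coeff 2 • (α ^ 2) := by
    rw [aeval_eq_sum_range' hdeg]
    rw [Finset.sum_range_succ, Finset.sum_range_succ, Finset.sum_range_one]
  have h2 : (2 : ℕ) < B.dim := hi ▸ i.isLt
  refine ⟨r.coeff 2, ?_⟩
  rw [← hP]
  show B.basis.coord i (aeval α P) = _
  rw [key, hsum]
  rw [map_add, map_add, map_zsmul, map_zsmul, map_zsmul,
    coord_pow α B hBgen i hi 0 (by omega), coord_pow α B hBgen i hi 1 (by omega),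
    coord_pow α B hBgen i hi 2 h2]
  norm_num

lemma coord_beta (α : K) (B : PowerBasis ℚ K) (hBgen : B.gen = α) (i : Fin B.dim)
    (hi : (i : ℕ) = 2) (a b q : ℤ) :
    B.basis.coord i (((a : K) + (b : K) * α + α ^ 2) / (q : K)) = 1 / (q : ℚ) := by
  have h2 : (2 : ℕ) < B.dim := hi ▸ i.isLt
  have hsm : ((a : K) + (b : K) * α + α ^ 2) / (q : K)
      = (q : ℚ)⁻¹ • ((a : ℤ) • (α ^ 0) + (b : ℤ) • (α ^ 1) + α ^ 2) := by
    rw [Algebra.smul_def, map_inv₀, div_eq_inv_mul, map_intCast]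
    push_cast [zsmul_eq_mul]
    ring
  rw [hsm, map_smul, map_add, map_add, map_zsmul, map_zsmul,
    coord_pow α B hBgen i hi 0 (by omega), coord_pow α B hBgen i hi 1 (by omega),
    coord_pow α B hBgen i hi 2 h2]
  norm_num

lemma key3 (m : ℤ) (h3 : ¬ (3:ℤ) ∣ m) (h1 : ¬ m ≡ 1 [ZMOD 9]) (h2 : ¬ m ≡ -1 [ZMOD 9]) :
    (3:ℤ) ∣ m^3 - m ∧ ¬ (9:ℤ) ∣ m^3 - m := by
  simp only [Int.ModEq] at h1 h2
  obtain ⟨q, r, hqr, hr0, hr9⟩ : ∃ q r : ℤ, m = 9*q + r ∧ 0 ≤ r ∧ r < 9 :=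
    ⟨m / 9, m % 9, by omega, by omega, by omega⟩
  have hr : r ≠ 1 ∧ r ≠ 8 ∧ ¬ (3:ℤ) ∣ r := by omega
  obtain ⟨s, hs⟩ : ∃ s, m^3 - m = (r^3 - r) + 9*s :=
    ⟨81*q^3 + 27*q^2*r + 3*q*r^2 - q, by subst hqr; ring⟩
  have ha : (3:ℤ) ∣ r^3 - r ∧ ¬ (9:ℤ) ∣ r^3 - r := by
    obtain ⟨hr1, hr8, hr3⟩ := hr
    interval_cases r <;> revert hr1 hr8 hr3 <;> decide
  rw [hs]; omega

lemma eisenstein_p (m p : ℤ) (hp : Prime p) (hpm : p ∣ m) (hsq : ¬ (p*p ∣ m)) :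
    ((X:ℤ[X])^3 - C m).IsEisensteinAt (Submodule.span ℤ {p}) := by
  constructor
  · rw [(monic_X_pow_sub_C m (three_ne_zero)).leadingCoeff]
    rw [Ideal.submodule_span_eq, Ideal.mem_span_singleton]
    exact fun h => hp.not_unit (isUnit_of_dvd_one h)
  · intro i hi
    rw [natDegree_X_pow_sub_C] at hi
    rw [Ideal.submodule_span_eq, Ideal.mem_span_singleton, coeff_sub, coeff_X_pow, coeff_C]
    interval_cases i <;> simp [hpm, dvd_neg]
  · rw [Ideal.submodule_span_eq, Ideal.span_singleton_pow, Ideal.mem_span_singleton,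
      coeff_sub, coeff_X_pow, coeff_C]
    intro h
    apply hsq
    rw [← pow_two]
    simpa using (dvd_neg.2 h)

lemma eisenstein_3 (m : ℤ) (h3 : ¬ (3:ℤ) ∣ m) (h1 : ¬ m ≡ 1 [ZMOD 9]) (h2 : ¬ m ≡ -1 [ZMOD 9]) :
    (((X:ℤ[X]) + C m)^3 - C m).IsEisensteinAt (Submodule.span ℤ {(3:ℤ)}) := by
  obtain ⟨hd3, hd9⟩ := key3 m h3 h1 h2
  have hmon : (((X:ℤ[X]) + C m)^3 - C m).Monic := by
    have : ((X:ℤ[X]) + C m)^3 - C m = X^3 + (C (3*m) * X^2 + C (3*m^2) * X + C (m^3 - m)) := by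
      simp only [C_mul, C_sub, C_pow, map_ofNat]
      ring
    rw [this]
    apply monic_X_pow_add
    exact lt_of_le_of_lt (by compute_degree) (by norm_num)
  have hnd : (((X:ℤ[X]) + C m)^3 - C m).natDegree = 3 := by
    compute_degree!
  constructor
  · rw [hmon.leadingCoeff, Ideal.submodule_span_eq, Ideal.mem_span_singleton]
    norm_num
  · intro i hi
    rw [hnd] at hi
    rw [Ideal.submodule_span_eq, Ideal.mem_span_singleton, coeff_sub, coeff_X_add_C_pow, coeff_C]
    interval_cases i
    · simpa using hd3
    · norm_num
    · norm_num
  · rw [Ideal.submodule_span_eq, Ideal.span_singleton_pow, Ideal.mem_span_singleton,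
      coeff_sub, coeff_X_add_C_pow, coeff_C]
    norm_num
    omega

lemma monic_aux (a b c : ℤ) : ((X:ℤ[X])^3 - X^2 + C a * X^2 + C b * X + C c).Monic := by
  have h : (X:ℤ[X])^3 - X^2 + C a * X^2 + C b * X + C c
      = X^3 + (-(X^2) + C a * X^2 + C b * X + C c) := by ring
  rw [h]
  apply monic_X_pow_add
  exact lt_of_le_of_lt (by compute_degree) (by norm_num)

lemma beta1_int (α : K) (kk : ℤ) (hα : α ^ 3 = 9*(kk:K) + 1) :
    IsIntegral ℤ (((1:K) + α + α^2)/3) := by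
  refine ⟨X^3 - X^2 - C (3*kk) * X - C (3*kk^2), ?_, ?_⟩
  · have : (X:ℤ[X])^3 - X^2 - C (3*kk) * X - C (3*kk^2)
        = X^3 - X^2 + C 0 * X^2 + C (-(3*kk)) * X + C (-(3*kk^2)) := by
      simp only [map_neg, map_mul, map_zero]; ring
    rw [this]; exact monic_aux _ _ _
  · simp only [eval₂_sub, eval₂_mul, eval₂_pow, eval₂_X, eval₂_C]
    push_cast
    have h3 : (3:K) ≠ 0 := three_ne_zero
    field_simp
    norm_num
    linear_combination ((α^3 + 3*α^2 + 3*α + 9*(kk:K) + 2)) * hα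

lemma beta2_int (α : K) (kk : ℤ) (hα : α ^ 3 = 9*(kk:K) - 1) :
    IsIntegral ℤ (((1:K) - α + α^2)/3) := by
  refine ⟨X^3 - X^2 + C (3*kk) * X - C (3*kk^2), ?_, ?_⟩
  · have : (X:ℤ[X])^3 - X^2 + C (3*kk) * X - C (3*kk^2)
        = X^3 - X^2 + C 0 * X^2 + C (3*kk) * X + C (-(3*kk^2)) := by
      simp only [map_neg, map_mul, map_zero]; ring
    rw [this]; exact monic_aux _ _ _
  · simp only [eval₂_sub, eval₂_add, eval₂_mul, eval₂_pow, eval₂_X, eval₂_C]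
    push_cast
    have h3 : (3:K) ≠ 0 := three_ne_zero
    field_simp
    norm_num
    linear_combination ((α^3 - 3*α^2 + 3*α + 9*(kk:K) - 2)) * hα

lemma betap_int (α : K) (p j : ℤ) (hp : (p:K) ≠ 0) (hα : α ^ 3 = (p:K)^2 * (j:K)) :
    IsIntegral ℤ (α^2 / (p:K)) := by
  refine ⟨X^3 - C (p*j^2), monic_X_pow_sub_C _ (by norm_num), ?_⟩
  simp only [eval₂_sub, eval₂_pow, eval₂_X, eval₂_C]
  push_cast
  field_simp
  linear_combination ((α^3 + (p:K)^2*(j:K))) * hα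

lemma strip (α : K) :
    ∀ (d : ℤ), d ≠ 0 →
    (∀ p : ℤ, Prime p → p ∣ d → ∀ z : K, IsIntegral ℤ z →
      p • z ∈ Algebra.adjoin ℤ ({α} : Set K) → z ∈ Algebra.adjoin ℤ ({α} : Set K)) →
    ∀ z : K, IsIntegral ℤ z → d • z ∈ Algebra.adjoin ℤ ({α} : Set K) →
      z ∈ Algebra.adjoin ℤ ({α} : Set K) := by
  have main : ∀ n : ℕ, ∀ d : ℤ, d.natAbs = n → d ≠ 0 →
      (∀ p : ℤ, Prime p → p ∣ d → ∀ z : K, IsIntegral ℤ z →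
        p • z ∈ Algebra.adjoin ℤ ({α} : Set K) → z ∈ Algebra.adjoin ℤ ({α} : Set K)) →
      ∀ z : K, IsIntegral ℤ z → d • z ∈ Algebra.adjoin ℤ ({α} : Set K) →
        z ∈ Algebra.adjoin ℤ ({α} : Set K) := by
    intro n
    induction n using Nat.strong_induction_on with
    | _ n ih =>
      intro d hdn hd0 H z hz hdz
      by_cases hu : IsUnit d
      · rcases Int.isUnit_iff.1 hu with rfl | rfl
        · simpa using hdz
        · have : -z ∈ Algebra.adjoin ℤ ({α} : Set K) := by simpa using hdz
          simpa using neg_mem this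
      · obtain ⟨p, hp, hdvd⟩ := Int.exists_prime_and_dvd (by
          intro h; exact hu (Int.isUnit_iff_natAbs_eq.2 h))
        obtain ⟨e, rfl⟩ := hdvd
        have he0 : e ≠ 0 := by rintro rfl; simp at hd0
        have hlt : e.natAbs < n := by
          subst hdn
          rw [Int.natAbs_mul]
          have h2 : 2 ≤ p.natAbs := (Int.prime_iff_natAbs_prime.mp hp).two_le
          have h1 : 1 ≤ e.natAbs := by omega
          calc e.natAbs < 2 * e.natAbs := by omega
            _ ≤ p.natAbs * e.natAbs := Nat.mul_le_mul_right _ h2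
        have hez : e • z ∈ Algebra.adjoin ℤ ({α} : Set K) := by
          apply H p hp (dvd_mul_right p e) (e • z) (hz.smul e)
          rw [smul_smul]; exact hdz
        exact ih e.natAbs hlt e rfl he0
          (fun q hq hqd => H q hq (hqd.mul_left p)) z hz hez
  exact fun d => main d.natAbs d rfl

lemma discr_eq (m : ℤ) (α : K)
    (hminQ : minpoly ℚ α = (X:ℚ[X])^3 - C (m:ℚ))
    (B : PowerBasis ℚ K) (hBgen : B.gen = α) (hBdim : B.dim = 3) :
    Algebra.discr ℚ B.basis = -27 * (m : ℚ) ^ 2 := by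
  have hfr : Module.finrank ℚ K = 3 := by rw [B.finrank, hBdim]
  have hnα : Algebra.norm ℚ α = (m : ℚ) := by
    have h := PowerBasis.norm_gen_eq_coeff_zero_minpoly B
    rw [hBgen, hminQ, hBdim] at h
    simp only [coeff_sub, coeff_X_pow, coeff_C] at h
    norm_num at h
    exact h
  rw [Algebra.discr_powerBasis_eq_norm, hfr, hBgen, hminQ]
  have hder : derivative ((X:ℚ[X])^3 - C (m:ℚ)) = C 3 * X^2 := by
    simp [derivative_X_pow]
    rw [← map_one C, ← C_add]; norm_num
  rw [hder]
  have : aeval α (C (3:ℚ) * X^2) = algebraMap ℚ K 3 * α^2 := by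
    simp [Algebra.smul_def]
  rw [this, map_mul, Algebra.norm_algebraMap, hfr, map_pow, hnα]
  norm_num

end PureCubicAux

open PureCubicAux

/-- Pure cubic fields: for `K = ℚ(α)` with `α³ = m`, `X³ - m` irreducible and `m ≠ 0`,
one has `𝒪_K = ℤ[α]` iff `m` is square-free and `m ≢ ±1 (mod 9)`. -/
theorem pure_cubic_alpha_monogenic_iff
    (m : ℤ) (hm : m ≠ 0)
    (hirr : Irreducible ((X : ℚ[X]) ^ 3 - C (m : ℚ)))
    (K : Type) [Field K] [NumberField K]
    (α : K) (hroot : α ^ 3 = (m : K))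
    (hgen : Algebra.adjoin ℚ {α} = ⊤) :
    integralClosure ℤ K = Algebra.adjoin ℤ {α} ↔
      (Squarefree m ∧ ¬ m ≡ 1 [ZMOD 9] ∧ ¬ m ≡ -1 [ZMOD 9]) := by
  have hintZ : IsIntegral ℤ α := isInt m α hroot
  have hintQ : IsIntegral ℚ α := hintZ.tower_top
  have hminQ := minpolyQ m hirr α hroot
  have hminZ := minpolyZ m hirr α hroot
  set B := pb α hintQ hgen with hB
  have hBgen : B.gen = α := pb_gen α hintQ hgen
  have hBdim : B.dim = 3 := by
    rw [hB, pb_dim, hminQ, natDegree_X_pow_sub_C]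
  have h2B : (2:ℕ) < B.dim := by omega
  set i : Fin B.dim := ⟨2, h2B⟩ with hidef
  have hival : (i : ℕ) = 2 := rfl
  constructor
  · intro heq
    refine ⟨?_, ?_, ?_⟩
    · -- squarefree
      intro x hxx
      by_contra hxu
      obtain ⟨p, hp, hpx⟩ := Int.exists_prime_and_dvd
        (fun h => hxu (Int.isUnit_iff_natAbs_eq.2 h))
      have hppm : p * p ∣ m := dvd_trans (mul_dvd_mul hpx hpx) hxx
      obtain ⟨j, hj⟩ : ∃ j, m = p^2 * j := by
        obtain ⟨j, hj⟩ := hppm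
        exact ⟨j, by rw [hj]; ring⟩
      have hpK : (p : K) ≠ 0 := by
        exact_mod_cast fun h => hp.ne_zero (by exact_mod_cast h)
      have hβ : IsIntegral ℤ (α^2 / (p:K)) := by
        apply betap_int α p j hpK
        rw [hroot, hj]; push_cast; ring
      have hβmem : α^2 / (p:K) ∈ Algebra.adjoin ℤ ({α} : Set K) := by
        rw [← heq]; exact hβ
      obtain ⟨k, hk⟩ := coord_int m α hroot B hBgen i hival hβmem
      have hc : B.basis.coord i (α^2 / (p:K)) = 1 / (p:ℚ) := by
        have h0 : α^2 / (p:K) = (((0:ℤ):K) + ((0:ℤ):K) * α + α^2) / ((p:ℤ):K) := by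
          push_cast; ring
        rw [h0, coord_beta α B hBgen i hival 0 0 p]
      rw [hc] at hk
      have hpQ : (p:ℚ) ≠ 0 := by exact_mod_cast hp.ne_zero
      have : (p * k : ℤ) = 1 := by
        have : (p:ℚ) * k = 1 := by field_simp at hk; linarith [hk]
        exact_mod_cast this
      exact hp.not_isUnit (IsUnit.of_mul_eq_one _ this)
    · -- not ≡ 1
      intro hcong
      obtain ⟨kk, hkk⟩ : ∃ k : ℤ, m = 9*k + 1 := by
        have := hcong
        simp only [Int.ModEq] at this
        exact ⟨(m-1)/9, by omega⟩
      have hβ : IsIntegral ℤ (((1:K) + α + α^2)/3) := by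
        apply beta1_int α kk
        rw [hroot, hkk]; push_cast; ring
      have hβmem : ((1:K) + α + α^2)/3 ∈ Algebra.adjoin ℤ ({α} : Set K) := by
        rw [← heq]; exact hβ
      obtain ⟨k, hk⟩ := coord_int m α hroot B hBgen i hival hβmem
      have hc : B.basis.coord i (((1:K) + α + α^2)/3) = 1 / (3:ℚ) := by
        have h0 : ((1:K) + α + α^2)/3 = (((1:ℤ):K) + ((1:ℤ):K) * α + α^2) / ((3:ℤ):K) := by
          push_cast; ring
        rw [h0, coord_beta α B hBgen i hival 1 1 3]
        norm_num
      rw [hc] at hk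
      have : (3 * k : ℤ) = 1 := by
        have : (3:ℚ) * k = 1 := by field_simp at hk; linarith [hk]
        exact_mod_cast this
      omega
    · -- not ≡ -1
      intro hcong
      obtain ⟨kk, hkk⟩ : ∃ k : ℤ, m = 9*k - 1 := by
        have := hcong
        simp only [Int.ModEq] at this
        exact ⟨(m+1)/9, by omega⟩
      have hβ : IsIntegral ℤ (((1:K) - α + α^2)/3) := by
        apply beta2_int α kk
        rw [hroot, hkk]; push_cast; ring
      have hβmem : ((1:K) - α + α^2)/3 ∈ Algebra.adjoin ℤ ({α} : Set K) := by
        rw [← heq]; exact hβ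
      obtain ⟨k, hk⟩ := coord_int m α hroot B hBgen i hival hβmem
      have hc : B.basis.coord i (((1:K) - α + α^2)/3) = 1 / (3:ℚ) := by
        have h0 : ((1:K) - α + α^2)/3 = (((1:ℤ):K) + ((-1:ℤ):K) * α + α^2) / ((3:ℤ):K) := by
          push_cast; ring
        rw [h0, coord_beta α B hBgen i hival 1 (-1) 3]
        norm_num
      rw [hc] at hk
      have : (3 * k : ℤ) = 1 := by
        have : (3:ℚ) * k = 1 := by field_simp at hk; linarith [hk]
        exact_mod_cast this
      omega
  · rintro ⟨hsf, h1, h2⟩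
    apply le_antisymm
    · -- hard: integralClosure ≤ adjoin
      intro x hx
      have hxint : IsIntegral ℤ x := hx
      have hBint : IsIntegral ℤ B.gen := hBgen.symm ▸ hintZ
      have hD : ((27 * m^2 : ℤ)) • x ∈ Algebra.adjoin ℤ ({α} : Set K) := by
        have hd := Algebra.discr_mul_isIntegral_mem_adjoin (R := ℤ) (K := ℚ)
          (B := B) hBint hxint
        rw [discr_eq m α hminQ B hBgen hBdim, hBgen] at hd
        have hcast : (-27 * (m:ℚ)^2) • x = ((-27 * m^2 : ℤ)) • x := by
          rw [← Int.cast_smul_eq_zsmul ℚ]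
          push_cast
          ring_nf
        rw [hcast] at hd
        have : ((27 * m^2 : ℤ)) • x = -(((-27 * m^2 : ℤ)) • x) := by
          rw [← neg_smul]; ring_nf
        rw [this]
        exact neg_mem hd
      have hd0 : (27 * m^2 : ℤ) ≠ 0 := mul_ne_zero (by norm_num) (pow_ne_zero 2 hm)
      refine strip α (27 * m^2) hd0 ?_ x hxint hD
      intro p hp hpd z hz hpz
      -- key: primes dividing 27 m² handled via Eisenstein
      have hsqf : ¬ (p * p ∣ m) := fun h => hp.not_isUnit (hsf p h)
      have hcases : p ∣ m ∨ (p ∣ 3 ∧ ¬ (3:ℤ) ∣ m) := by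
        rcases (hp.dvd_mul.mp hpd) with hc | hc
        · have hp3 : p ∣ 3 := hp.dvd_of_dvd_pow (n := 3) (by norm_num; exact hc)
          by_cases h3m : (3:ℤ) ∣ m
          · exact Or.inl (hp3.trans h3m)
          · exact Or.inr ⟨hp3, h3m⟩
        · exact Or.inl (hp.dvd_of_dvd_pow hc)
      rcases hcases with hpm | ⟨hp3, h3m⟩
      · -- Eisenstein at p with generator α
        have hei : (minpoly ℤ B.gen).IsEisensteinAt (Submodule.span ℤ {p}) := by
          rw [hBgen, hminZ]; exact eisenstein_p m p hp hpm hsqf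
        have := mem_adjoin_of_smul_prime_smul_of_minpoly_isEisensteinAt
          (R := ℤ) (K := ℚ) (B := B) hp hBint hz (by rw [hBgen]; exact hpz) hei
        rwa [hBgen] at this
      · -- p = ±3, use generator θ = α - m
        have hp33 : p = 3 ∨ p = -3 := by
          have hpn : Nat.Prime p.natAbs := Int.prime_iff_natAbs_prime.mp hp
          have hna : p.natAbs ∣ 3 := by
            have := Int.natAbs_dvd_natAbs.2 hp3
            simpa using this
          have h3 : p.natAbs = 3 := (Nat.prime_dvd_prime_iff_eq hpn (by norm_num)).mp hna
          rcases Int.natAbs_eq p with h | h <;> omega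
        set θ : K := α - (m : K) with hθ
        have hmK : algebraMap ℤ K m = (m : K) := by simp
        have hmQK : algebraMap ℚ K ((m : ℤ) : ℚ) = (m : K) := by
          rw [map_intCast]
        have hθZ : IsIntegral ℤ θ := hintZ.sub (hmK ▸ isIntegral_algebraMap)
        have hθQ : IsIntegral ℚ θ := hθZ.tower_top
        have hθgen : Algebra.adjoin ℚ {θ} = ⊤ := by
          rw [_root_.eq_top_iff, ← hgen]
          apply Algebra.adjoin_le
          intro y hy; rw [Set.mem_singleton_iff] at hy; subst hy
          have ha : θ ∈ Algebra.adjoin ℚ ({θ} : Set K) := Algebra.subset_adjoin rfl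
          have hb : (m : K) ∈ Algebra.adjoin ℚ ({θ} : Set K) := by
            rw [← hmQK]; exact Subalgebra.algebraMap_mem _ _
          have := add_mem ha hb
          simpa [hθ] using this
        set B' := pb θ hθQ hθgen with hB'
        have hB'gen : B'.gen = θ := pb_gen θ hθQ hθgen
        have hB'int : IsIntegral ℤ B'.gen := hB'gen.symm ▸ hθZ
        have hadj : Algebra.adjoin ℤ ({θ} : Set K) = Algebra.adjoin ℤ ({α} : Set K) := by
          apply le_antisymm
          · apply Algebra.adjoin_le
            intro y hy; rw [Set.mem_singleton_iff] at hy; subst hy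
            exact sub_mem (Algebra.subset_adjoin rfl)
              (hmK ▸ Subalgebra.algebraMap_mem _ m)
          · apply Algebra.adjoin_le
            intro y hy; rw [Set.mem_singleton_iff] at hy; subst hy
            have := add_mem (Algebra.subset_adjoin (R := ℤ) (show θ ∈ ({θ} : Set K) from rfl))
              (hmK ▸ Subalgebra.algebraMap_mem (Algebra.adjoin ℤ ({θ} : Set K)) m)
            simpa [hθ] using this
        have hminQθ : minpoly ℚ θ = ((X:ℚ[X])^3 - C (m:ℚ)).comp (X + C (m:ℚ)) := by
          have h := minpoly.sub_algebraMap (A := ℚ) α ((m : ℤ) : ℚ)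
          rw [hminQ, hmQK] at h
          exact h
        have hminZθ : minpoly ℤ θ = ((X:ℤ[X]) + C m)^3 - C m := by
          have h := minpoly.isIntegrallyClosed_eq_field_fractions' ℚ hθZ
          rw [hminQθ] at h
          apply Polynomial.map_injective (algebraMap ℤ ℚ) (fun a b hab => by exact_mod_cast hab)
          rw [← h]
          simp only [Polynomial.map_sub, Polynomial.map_pow, Polynomial.map_add,
            Polynomial.map_X, Polynomial.map_C, sub_comp, pow_comp, add_comp, X_comp, C_comp]
          norm_num
        have hei : (minpoly ℤ B'.gen).IsEisensteinAt (Submodule.span ℤ {p}) := by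
          rw [hB'gen, hminZθ]
          rcases hp33 with rfl | rfl
          · exact eisenstein_3 m h3m h1 h2
          · convert eisenstein_3 m h3m h1 h2 using 1
            have heq : Ideal.span {(-3:ℤ)} = Ideal.span {(3:ℤ)} := by
              rw [show ((-3:ℤ)) = -(3:ℤ) by norm_num, Ideal.span_singleton_neg]
            exact heq
        have hfin := mem_adjoin_of_smul_prime_smul_of_minpoly_isEisensteinAt
          (R := ℤ) (K := ℚ) (B := B') hp hB'int hz (by rw [hB'gen, hadj]; exact hpz) hei
        rw [hB'gen, hadj] at hfin
        exact hfin
    · -- easy: adjoin ≤ integralClosure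
      apply Algebra.adjoin_le
      intro y hy
      rw [Set.mem_singleton_iff] at hy
      subst hy
      exact hintZ
end

section
/- Let m be a nonzero integer such that X^4 − m is irreducible over ℚ, α a root and K = ℚ(α). Then O_K = ℤ[α] if and only if m is square-free and m is not congruent to 1 modulo 4. -/
open Polynomial

/-- Pure quartic fields: for `K = ℚ(α)` with `α⁴ = m`, `X⁴ - m` irreducible and `m ≠ 0`,
one has `𝒪_K = ℤ[α]` iff `m` is square-free and `m ≢ 1 (mod 4)`. -/
theorem pure_quartic_alpha_monogenic_iff
    (m : ℤ) (hm : m ≠ 0)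
    (hirr : Irreducible ((X : ℚ[X]) ^ 4 - C (m : ℚ)))
    (K : Type) [Field K] [NumberField K]
    (α : K) (hroot : α ^ 4 = (m : K))
    (hgen : Algebra.adjoin ℚ {α} = ⊤) :
    integralClosure ℤ K = Algebra.adjoin ℤ {α} ↔
      (Squarefree m ∧ ¬ m ≡ 1 [ZMOD 4]) := by
  have hmoZ : ((X : ℤ[X]) ^ 4 - C m).Monic := monic_X_pow_sub_C m (by norm_num)
  have hmoQ : ((X : ℚ[X]) ^ 4 - C (m : ℚ)).Monic := monic_X_pow_sub_C _ (by norm_num)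
  have hα : IsIntegral ℤ α := by
    refine ⟨X ^ 4 - C m, hmoZ, ?_⟩
    rw [← Polynomial.aeval_def, map_sub, aeval_X_pow, aeval_C, hroot]
    simp
  have hαQ : IsIntegral ℚ α := hα.tower_top
  have hminQ : minpoly ℚ α = X ^ 4 - C (m : ℚ) := by
    refine (minpoly.eq_of_irreducible_of_monic hirr ?_ hmoQ).symm
    rw [map_sub, aeval_X_pow, aeval_C, hroot]
    simp
  have hminZ : minpoly ℤ α = X ^ 4 - C m := by
    have h1 := minpoly.isIntegrallyClosed_eq_field_fractions' ℚ hα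
    apply Polynomial.map_injective (algebraMap ℤ ℚ)
      (fun a b h => by exact_mod_cast h)
    rw [← h1, hminQ]
    simp
  have hnd4 : ((X : ℤ[X]) ^ 4 - C m).natDegree = 4 := natDegree_X_pow_sub_C
  -- the power basis generated by α
  let e : (Algebra.adjoin ℚ {α}) ≃ₐ[ℚ] K :=
    (Subalgebra.equivOfEq _ _ hgen).trans Subalgebra.topEquiv
  let B : PowerBasis ℚ K := (Algebra.adjoin.powerBasis hαQ).map e
  have hBgen : B.gen = α := by simp [B, e]
  have hBdim : B.dim = 4 := by
    show (Algebra.adjoin.powerBasis hαQ).dim = 4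
    rw [Algebra.adjoin.powerBasis_dim, hminQ]
    exact natDegree_X_pow_sub_C
  have hadj_le : Algebra.adjoin ℤ {α} ≤ integralClosure ℤ K := by
    apply Algebra.adjoin_le
    intro x hx
    rw [Set.mem_singleton_iff] at hx
    subst hx
    exact hα
  have key : ∀ Q : ℤ[X], aeval α Q = 0 → ((X : ℤ[X]) ^ 4 - C m) ∣ Q := by
    intro Q hQ
    rw [← hminZ]
    exact minpoly.isIntegrallyClosed_dvd hα hQ
  constructor
  · -- easy direction
    intro h
    have getP : ∀ z : K, IsIntegral ℤ z → ∃ P : ℤ[X], aeval α P = z := by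
      intro z hz
      have hz' : z ∈ Algebra.adjoin ℤ {α} := by
        rw [← h]; exact hz
      rw [Algebra.adjoin_singleton_eq_range_aeval] at hz'
      obtain ⟨P, hP⟩ := hz'
      exact ⟨P, hP⟩
    constructor
    · -- squarefree
      by_contra hns
      rw [Squarefree] at hns
      push_neg at hns
      obtain ⟨x, hxm, hxu⟩ := hns
      have hx0 : x ≠ 0 := by
        rintro rfl
        exact hm (by simpa using hxm)
      obtain ⟨p, hp, hpx⟩ := Int.exists_prime_and_dvd
        (fun h1 => hxu (Int.isUnit_iff_natAbs_eq.mpr h1))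
      have hppm : p * p ∣ m := dvd_trans (mul_dvd_mul hpx hpx) hxm
      have hpm : p ∣ m := dvd_trans (dvd_mul_right p p) hppm
      set q := p.natAbs with hqdef
      have hq : q.Prime := Int.prime_iff_natAbs_prime.mp hp
      haveI : Fact q.Prime := ⟨hq⟩
      have hpK : ((p : ℤ) : K) ≠ 0 := Int.cast_ne_zero.mpr hp.ne_zero
      set β : K := α ^ 2 / ((p : ℤ) : K) with hβdef
      have hβ2 : β ^ 2 = ((m / (p * p) : ℤ) : K) := by
        have hc : (m / (p * p) : ℤ) * (p * p) = m := Int.ediv_mul_cancel hppm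
        have hcK : ((m / (p * p) : ℤ) : K) * (((p:ℤ):K) * ((p:ℤ):K)) = (m : K) := by
          exact_mod_cast congrArg (fun t : ℤ => (t : K)) hc
        rw [hβdef, div_pow, div_eq_iff (pow_ne_zero 2 hpK),
          show (α ^ 2) ^ 2 = α ^ 4 from by ring, hroot, ← hcK]
        ring
      have hβint : IsIntegral ℤ β := by
        refine ⟨X ^ 2 - C (m / (p * p)), monic_X_pow_sub_C _ (by norm_num), ?_⟩
        rw [← Polynomial.aeval_def, map_sub, aeval_X_pow, aeval_C]
        rw [show (algebraMap ℤ K) (m / (p*p)) = ((m / (p*p) : ℤ) : K) from rfl, ← hβ2]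
        ring
      obtain ⟨P, hP⟩ := getP β hβint
      have hQ0 : aeval α (C p * P - X ^ 2) = 0 := by
        simp only [map_sub, map_mul, aeval_C, aeval_X_pow, hP]
        rw [show (algebraMap ℤ K) p = ((p:ℤ):K) from rfl, hβdef]
        field_simp
        ring
      have hdvd := key _ hQ0
      have hdvd2 := Polynomial.map_dvd (Int.castRingHom (ZMod q)) hdvd
      have hmq : ((m : ℤ) : ZMod q) = 0 := by
        rw [ZMod.intCast_zmod_eq_zero_iff_dvd]
        exact Int.natAbs_dvd.mpr hpm
      have hpq : ((p : ℤ) : ZMod q) = 0 := by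
        rw [ZMod.intCast_zmod_eq_zero_iff_dvd]
        exact Int.natAbs_dvd.mpr dvd_rfl
      simp only [Polynomial.map_sub, Polynomial.map_mul, Polynomial.map_pow,
        Polynomial.map_X, Polynomial.map_C, Int.coe_castRingHom, hmq, hpq,
        Polynomial.C_0, sub_zero, zero_mul, zero_sub] at hdvd2
      have hX2 : ((X : (ZMod q)[X]) ^ 2) ≠ 0 := pow_ne_zero _ X_ne_zero
      have hdeg := Polynomial.degree_le_of_dvd ((dvd_neg).mp hdvd2) hX2
      rw [degree_X_pow, degree_X_pow] at hdeg
      norm_num at hdeg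
    · -- m ≢ 1 mod 4
      intro hm1
      obtain ⟨k, hk⟩ := hm1.symm.dvd
      have hmodd : ¬ (2:ℤ) ∣ m := by omega
      set β : K := (1 + α ^ 2) / 2 with hβdef
      have hkK : (4 : K) * (k : K) = (m : K) - 1 := by
        have h5 : ((4 * k : ℤ) : K) = ((m - 1 : ℤ) : K) := by rw [← hk]
        push_cast at h5
        linear_combination h5
      have hβeq : β ^ 2 = β + (k : K) := by
        rw [hβdef]
        have h2 : (2 : K) ≠ 0 := two_ne_zero
        field_simp
        linear_combination hroot - hkK
      have hβint : IsIntegral ℤ β := by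
        refine ⟨X ^ 2 - (X + C k), ?_, ?_⟩
        · exact Polynomial.monic_X_pow_sub (n := 2)
            (by rw [degree_X_add_C]; exact_mod_cast one_lt_two)
        · rw [← Polynomial.aeval_def, map_sub, map_add, aeval_X_pow, aeval_X, aeval_C]
          rw [show (algebraMap ℤ K) k = ((k:ℤ):K) from rfl, hβeq]
          ring
      obtain ⟨P, hP⟩ := getP β hβint
      have hQ0 : aeval α (C 2 * P - (1 + X ^ 2)) = 0 := by
        simp only [map_sub, map_mul, aeval_C, map_add, map_one, aeval_X_pow, hP]
        rw [show (algebraMap ℤ K) 2 = (2 : K) by simp, hβdef]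
        field_simp
        ring
      have hdvd := key _ hQ0
      have hdvd2 := Polynomial.map_dvd (Int.castRingHom (ZMod 2)) hdvd
      have hm2 : ((m : ℤ) : ZMod 2) = ((1 : ℤ) : ZMod 2) := by
        rw [ZMod.intCast_eq_intCast_iff]
        exact Int.modEq_iff_dvd.mpr (by omega)
      simp only [Polynomial.map_sub, Polynomial.map_mul, Polynomial.map_pow,
        Polynomial.map_add, Polynomial.map_one, Polynomial.map_X, Polynomial.map_C,
        Int.coe_castRingHom, hm2] at hdvd2
      rw [show ((2:ℤ) : ZMod 2) = 0 by decide] at hdvd2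
      rw [Polynomial.C_0, zero_mul, zero_sub] at hdvd2
      have hne2 : ((1 : (ZMod 2)[X]) + X ^ 2) ≠ 0 := by
        intro hh
        have := congrArg (fun t => Polynomial.coeff t 0) hh
        simp at this
      have hdeg := Polynomial.degree_le_of_dvd ((dvd_neg).mp hdvd2) hne2
      have hd1 : ((X : (ZMod 2)[X]) ^ 4 - C ((1:ℤ) : ZMod 2)).degree = 4 := by
        rw [degree_X_pow_sub_C (by norm_num)]
        norm_num
      have hd2 : ((1 : (ZMod 2)[X]) + X ^ 2).degree = 2 := by
        rw [add_comm, show ((1 : (ZMod 2)[X])) = C 1 from (Polynomial.C_1).symm,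
          degree_X_pow_add_C (by norm_num)]
        norm_num
      rw [hd1, hd2] at hdeg
      norm_num at hdeg
  · -- hard direction
    rintro ⟨hsf, hm4⟩
    -- Eisenstein at primes dividing m
    have hEis : ∀ p : ℤ, Prime p → p ∣ m →
        ((X : ℤ[X]) ^ 4 - C m).IsEisensteinAt (Submodule.span ℤ {p}) := by
      intro p hp hpm
      constructor
      · intro hmem
        rw [hmoZ.leadingCoeff, Ideal.submodule_span_eq, Ideal.mem_span_singleton] at hmem
        exact hp.not_unit (isUnit_of_dvd_one hmem)
      · intro i hi
        rw [hnd4] at hi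
        rw [coeff_sub, coeff_X_pow, if_neg (by omega), coeff_C,
          Ideal.submodule_span_eq, Ideal.mem_span_singleton]
        split
        · simpa using (dvd_neg.mpr hpm)
        · simp
      · intro hmem
        rw [coeff_sub, coeff_X_pow, if_neg (by norm_num), coeff_C, if_pos rfl,
          Ideal.submodule_span_eq, Ideal.span_singleton_pow, Ideal.mem_span_singleton] at hmem
        rw [zero_sub, dvd_neg, pow_two] at hmem
        exact hp.not_unit (hsf p hmem)
    -- stripping one prime at a time
    have hstrip : ∀ p : ℕ, p.Prime → (p : ℤ) ∣ 2 * m → ∀ w : K, IsIntegral ℤ w →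
        ((p : ℕ) : ℤ) • w ∈ Algebra.adjoin ℤ {α} → w ∈ Algebra.adjoin ℤ {α} := by
      intro p hp hp2m w hw hpw
      have hpZ : Prime (p : ℤ) := Nat.prime_iff_prime_int.mp hp
      by_cases hpm : (p : ℤ) ∣ m
      · have hres := mem_adjoin_of_smul_prime_smul_of_minpoly_isEisensteinAt
          (K := ℚ) (B := B) hpZ (show IsIntegral ℤ B.gen by rw [hBgen]; exact hα)
          hw (show ((p:ℕ):ℤ) • w ∈ Algebra.adjoin ℤ {B.gen} by rwa [hBgen])
          (show (minpoly ℤ B.gen).IsEisensteinAt _ by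
            rw [hBgen, hminZ]; exact hEis _ hpZ hpm)
        rwa [hBgen] at hres
      · -- p = 2 and m odd
        have hp2 : p = 2 := by
          have hd2 : (p : ℤ) ∣ 2 := (hpZ.dvd_mul.mp hp2m).resolve_right hpm
          have : p ∣ 2 := by exact_mod_cast hd2
          exact (Nat.prime_dvd_prime_iff_eq hp Nat.prime_two).mp this
        subst hp2
        have hmodd : ¬ (2:ℤ) ∣ m := by simpa using hpm
        have hγQ : IsIntegral ℚ (α - 1) := hαQ.sub isIntegral_one
        have hγZ : IsIntegral ℤ (α - 1) := hα.sub isIntegral_one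
        have hadjQ : Algebra.adjoin ℚ {α - 1} = Algebra.adjoin ℚ {α} := by
          apply le_antisymm
          · exact Algebra.adjoin_le (Set.singleton_subset_iff.mpr
              (sub_mem (Algebra.subset_adjoin (Set.mem_singleton _)) (one_mem _)))
          · refine Algebra.adjoin_le (Set.singleton_subset_iff.mpr ?_)
            have h1 := add_mem (Algebra.subset_adjoin (R := ℚ)
              (Set.mem_singleton (α - 1))) (one_mem _)
            simpa using h1
        have hadjZ : Algebra.adjoin ℤ {α - 1} = Algebra.adjoin ℤ {α} := by
          apply le_antisymm
          · exact Algebra.adjoin_le (Set.singleton_subset_iff.mpr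
              (sub_mem (Algebra.subset_adjoin (Set.mem_singleton _)) (one_mem _)))
          · refine Algebra.adjoin_le (Set.singleton_subset_iff.mpr ?_)
            have h1 := add_mem (Algebra.subset_adjoin (R := ℤ)
              (Set.mem_singleton (α - 1))) (one_mem _)
            simpa using h1
        have hadjQtop : Algebra.adjoin ℚ {α - 1} = ⊤ := by rw [hadjQ, hgen]
        let e' : (Algebra.adjoin ℚ {α - 1}) ≃ₐ[ℚ] K :=
          (Subalgebra.equivOfEq _ _ hadjQtop).trans Subalgebra.topEquiv
        let B' : PowerBasis ℚ K := (Algebra.adjoin.powerBasis hγQ).map e'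
        have hB'gen : B'.gen = α - 1 := by simp [B', e']
        have hminZγ : minpoly ℤ (α - 1) = ((X : ℤ[X]) ^ 4 - C m).comp (X + C 1) := by
          have h1 := minpoly.isIntegrallyClosed_eq_field_fractions' ℚ hγZ
          apply Polynomial.map_injective (algebraMap ℤ ℚ) (fun a b h => by exact_mod_cast h)
          rw [← h1]
          have h2 : α - 1 = α - algebraMap ℚ K 1 := by simp
          rw [h2, minpoly.sub_algebraMap, hminQ, Polynomial.map_comp]
          simp
        have hgexp : ((X : ℤ[X]) ^ 4 - C m).comp (X + C 1) =
            X ^ 4 + C 4 * X ^ 3 + C 6 * X ^ 2 + C 4 * X + C (1 - m) := by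
          simp only [sub_comp, pow_comp, X_comp, C_comp, C_1]
          have h4 : (C (4:ℤ) : ℤ[X]) = 4 := by norm_num
          have h6 : (C (6:ℤ) : ℤ[X]) = 6 := by norm_num
          have h1m : (C (1 - m) : ℤ[X]) = 1 - C m := by
            rw [map_sub, Polynomial.C_1]
          rw [h4, h6, h1m]
          ring
        have hgmonic : (((X : ℤ[X]) ^ 4 - C m).comp (X + C 1)).Monic :=
          hmoZ.comp_X_add_C 1
        have hgnd : (((X : ℤ[X]) ^ 4 - C m).comp (X + C 1)).natDegree = 4 := by
          rw [natDegree_comp, hnd4, natDegree_X_add_C]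
        have hm14 : ¬ (4:ℤ) ∣ 1 - m := by
          intro h4
          exact hm4 (Int.modEq_iff_dvd.mpr h4)
        have hEis2 : (((X : ℤ[X]) ^ 4 - C m).comp (X + C 1)).IsEisensteinAt
            (Submodule.span ℤ {(2:ℤ)}) := by
          constructor
          · intro hmem
            rw [hgmonic.leadingCoeff, Ideal.submodule_span_eq,
              Ideal.mem_span_singleton] at hmem
            norm_num at hmem
          · intro i hi
            rw [hgnd] at hi
            rw [hgexp, Ideal.submodule_span_eq, Ideal.mem_span_singleton]
            interval_cases i <;>
              (simp only [coeff_add, coeff_C_mul, coeff_X_pow, coeff_C, coeff_X]; norm_num) <;>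
              omega
          · intro hmem
            rw [hgexp, Ideal.submodule_span_eq, Ideal.span_singleton_pow,
              Ideal.mem_span_singleton] at hmem
            simp only [coeff_add, coeff_C_mul, coeff_X_pow, coeff_C, coeff_X] at hmem
            norm_num at hmem
            exact hm14 (by omega)
        have hres := mem_adjoin_of_smul_prime_smul_of_minpoly_isEisensteinAt
          (K := ℚ) (B := B') Int.prime_two
          (show IsIntegral ℤ B'.gen by rw [hB'gen]; exact hγZ)
          hw
          (show ((2:ℤ)) • w ∈ Algebra.adjoin ℤ {B'.gen} by
            rw [hB'gen, hadjZ]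
            have : (((2:ℕ):ℤ)) = (2:ℤ) := by norm_num
            rwa [this] at hpw)
          (show (minpoly ℤ B'.gen).IsEisensteinAt _ by
            rw [hB'gen, hminZγ]; exact hEis2)
        rwa [hB'gen, hadjZ] at hres
    -- main induction
    have hmain : ∀ n : ℕ, (∀ p : ℕ, p.Prime → p ∣ n → (p:ℤ) ∣ 2 * m) → ∀ w : K,
        IsIntegral ℤ w → (n : ℤ) • w ∈ Algebra.adjoin ℤ {α} → n ≠ 0 →
        w ∈ Algebra.adjoin ℤ {α} := by
      intro n
      induction n using Nat.strong_induction_on with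
      | _ n ih =>
        intro hfac w hw hnw hn0
        rcases eq_or_ne n 1 with rfl | hn1
        · simpa using hnw
        · have hp : n.minFac.Prime := Nat.minFac_prime hn1
          obtain ⟨c, hc⟩ := Nat.minFac_dvd n
          have hc0 : c ≠ 0 := by
            rintro rfl
            exact hn0 (by simpa using hc)
          have hclt : c < n := by
            rw [hc]
            exact (Nat.lt_mul_iff_one_lt_left (Nat.pos_of_ne_zero hc0)).mpr hp.one_lt
          have hsm : ((n : ℤ)) • w = ((n.minFac : ℕ) : ℤ) • (((c : ℕ) : ℤ) • w) := by
            rw [← mul_smul, ← Int.natCast_mul, ← hc]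
          rw [hsm] at hnw
          have hcw := hstrip n.minFac hp (hfac n.minFac hp (Nat.minFac_dvd n)) _
            (hw.smul _) hnw
          exact ih c hclt
            (fun r hr hrc => hfac r hr (hrc.trans ⟨n.minFac, hc.trans (mul_comm _ _)⟩))
            w hw hcw hc0
    -- discriminant computation
    have hnormα : Algebra.norm ℚ α = -(m : ℚ) := by
      have hh := Algebra.PowerBasis.norm_gen_eq_coeff_zero_minpoly B
      rw [hBgen, hBdim, hminQ] at hh
      rw [hh, coeff_sub, coeff_X_pow, if_neg (by norm_num), coeff_C, if_pos rfl]
      ring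
    have hfin : Module.finrank ℚ K = 4 := by rw [B.finrank, hBdim]
    have hder : derivative (minpoly ℚ α) = C (4:ℚ) * X ^ 3 := by
      rw [hminQ, derivative_sub, derivative_C, derivative_X_pow]
      norm_num
    have hdisc : Algebra.discr ℚ B.basis = ((-(256 * m ^ 3) : ℤ) : ℚ) := by
      rw [Algebra.discr_powerBasis_eq_norm, hBgen, hder, hfin]
      have h1 : aeval α (C (4:ℚ) * X ^ 3) = algebraMap ℚ K 4 * α ^ 3 := by
        simp
      rw [h1, map_mul, map_pow, hnormα, Algebra.norm_algebraMap, hfin]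
      push_cast
      norm_num
      ring
    -- finish
    apply le_antisymm _ hadj_le
    intro z hz
    have hzint : IsIntegral ℤ z := hz
    have h1 : Algebra.discr ℚ B.basis • z ∈ Algebra.adjoin ℤ {α} := by
      have hh := Algebra.discr_mul_isIntegral_mem_adjoin (K := ℚ) (B := B)
        (show IsIntegral ℤ B.gen by rw [hBgen]; exact hα) hzint
      rwa [hBgen] at hh
    rw [hdisc, Int.cast_smul_eq_zsmul] at h1
    have h2 : ((256 * m ^ 3 : ℤ)) • z ∈ Algebra.adjoin ℤ {α} := by
      rw [neg_smul] at h1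
      have := Subalgebra.neg_mem _ h1
      rwa [neg_neg] at this
    set N := (256 * m ^ 3).natAbs with hN
    have hNz : (256 * m ^ 3 : ℤ) ≠ 0 := mul_ne_zero (by norm_num) (pow_ne_zero 3 hm)
    have h3 : ((N : ℕ) : ℤ) • z ∈ Algebra.adjoin ℤ {α} := by
      rcases Int.natAbs_eq (256 * m ^ 3) with he | he
      · rw [← he]; exact h2
      · have : ((N : ℕ) : ℤ) = -(256 * m ^ 3) := by rw [he]; ring
        rw [this, neg_smul]
        exact Subalgebra.neg_mem _ h2
    refine hmain N ?_ z hzint h3 ?_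
    · intro p hp hpN
      have hpZ : Prime (p : ℤ) := Nat.prime_iff_prime_int.mp hp
      have hdN : (p : ℤ) ∣ 256 * m ^ 3 := by
        have h4 : (p : ℤ) ∣ ((N : ℕ) : ℤ) := by exact_mod_cast hpN
        exact h4.trans (Int.natAbs_dvd.mpr dvd_rfl)
      rcases hpZ.dvd_mul.mp hdN with h5 | h5
      · have h6 : (p : ℤ) ∣ 2 := by
          have h7 : (256 : ℤ) = 2 ^ 8 := by norm_num
          rw [h7] at h5
          exact hpZ.dvd_of_dvd_pow h5
        exact dvd_mul_of_dvd_left h6 m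
      · have h6 : (p : ℤ) ∣ m := hpZ.dvd_of_dvd_pow h5
        exact h6.mul_left 2
    · exact Int.natAbs_ne_zero.mpr hNz
end

section
/- Let p be a prime, r ≥ 1, and m a nonzero integer. If p does not divide m, then ν_p(m^{p^r} − m) = ν_p(m^p − m). If p divides m but p² does not divide m, then ν_p(m^{p^r} − m) = 1 = ν_p(m^p − m). In particular, for m square-free the condition ν_p(m^{p^r} − m) = 1 is equivalent to ν_p(m^p − m) = 1, independently of r. -/
open Finset in
lemma core_val (p : ℕ) [Fact p.Prime] (a : ℤ) (ha : ((a : ZMod p)) = 1) (ha1 : a ≠ 1)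
    {k : ℕ} (hk : ¬ (p : ℤ) ∣ (k : ℤ)) :
    a ^ k - 1 ≠ 0 ∧ padicValInt p (a ^ k - 1) = padicValInt p (a - 1) := by
  have hS : ¬ (p : ℤ) ∣ (∑ i ∈ range k, a ^ i) := by
    rw [← ZMod.intCast_zmod_eq_zero_iff_dvd] at hk ⊢
    push_cast
    simpa [ha] using hk
  have hS0 : (∑ i ∈ range k, a ^ i) ≠ 0 := fun h => hS (h ▸ dvd_zero _)
  have key : a ^ k - 1 = (∑ i ∈ range k, a ^ i) * (a - 1) := (geom_sum_mul a k).symm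
  refine ⟨by rw [key]; exact mul_ne_zero hS0 (sub_ne_zero.mpr ha1), ?_⟩
  rw [key, padicValInt.mul hS0 (sub_ne_zero.mpr ha1),
    padicValInt.eq_zero_of_not_dvd hS, zero_add]

open Finset in
lemma step_val (p : ℕ) [Fact p.Prime] (r : ℕ) (hr : 1 ≤ r) (m : ℤ) (hm : m ≠ 0)
    (hpm : ¬ (p : ℤ) ∣ m) :
    padicValInt p (m ^ (p ^ r) - m) = padicValInt p (m ^ (p - 1) - 1) := by
  have hp : p.Prime := Fact.out
  set k : ℕ := ∑ i ∈ range r, p ^ i with hk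
  have hexp : (p - 1) * k + 1 = p ^ r := by
    have h1 : 1 ≤ p := hp.one_le
    have hg := geom_sum_mul (p : ℤ) r
    have hkc : ((k : ℕ) : ℤ) = ∑ i ∈ range r, (p : ℤ) ^ i := by rw [hk]; push_cast; rfl
    zify [h1]
    rw [hkc]
    linarith [hg]
  have hpk' : ¬ p ∣ k := by
    obtain ⟨n, rfl⟩ := Nat.exists_eq_add_of_le hr
    rw [hk, add_comm 1 n, Finset.sum_range_succ']
    simp only [pow_zero]
    intro h
    have hd : p ∣ ∑ i ∈ range n, p ^ (i + 1) :=
      Finset.dvd_sum fun i _ => dvd_pow_self _ (Nat.succ_ne_zero i)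
    have : p ∣ 1 := (Nat.dvd_add_right hd).mp h
    exact hp.one_lt.ne' (Nat.dvd_one.mp this)
  have hpk : ¬ (p : ℤ) ∣ (k : ℤ) := by exact_mod_cast hpk'
  have hferm : ((m ^ (p - 1) : ℤ) : ZMod p) = 1 := by
    push_cast
    exact ZMod.pow_card_sub_one_eq_one (by
      simpa [ZMod.intCast_zmod_eq_zero_iff_dvd] using hpm)
  have hfac : m ^ (p ^ r) - m = m * ((m ^ (p - 1)) ^ k - 1) := by
    rw [← pow_mul, mul_sub, mul_one, ← pow_succ', hexp]
  by_cases h1 : m ^ (p - 1) = 1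
  · rw [hfac, h1]; simp
  · obtain ⟨hne, hval⟩ := core_val p (m ^ (p - 1)) hferm h1 hpk
    rw [hfac, padicValInt.mul hm hne, padicValInt.eq_zero_of_not_dvd hpm, zero_add, hval]

lemma ram_val (p : ℕ) [Fact p.Prime] (n : ℕ) (hn : 2 ≤ n) (m : ℤ) (hm : m ≠ 0)
    (hpm : (p : ℤ) ∣ m) (hpm2 : ¬ (p : ℤ) ^ 2 ∣ m) :
    padicValInt p (m ^ n - m) = 1 := by
  have hvm : padicValInt p m = 1 := by
    have h1 : 1 ≤ padicValInt p m := by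
      have := (padicValInt_dvd_iff 1 m).mp (by simpa using hpm)
      tauto
    have h2 : ¬ 2 ≤ padicValInt p m := fun h =>
      hpm2 ((padicValInt_dvd_iff 2 m).mpr (Or.inr h))
    omega
  have hfac : m ^ n - m = m * (m ^ (n - 1) - 1) := by
    rw [mul_sub, mul_one, ← pow_succ']
    congr 2
    omega
  have hnd : ¬ (p : ℤ) ∣ (m ^ (n - 1) - 1) := by
    intro h
    have hd : (p : ℤ) ∣ m ^ (n - 1) := dvd_pow hpm (by omega)
    have : (p : ℤ) ∣ 1 := (dvd_sub_right hd).mp (by simpa using h)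
    have hp : p.Prime := Fact.out
    exact hp.one_lt.ne' (by exact_mod_cast Int.eq_one_of_dvd_one (by positivity) this)
  have hne : m ^ (n - 1) - 1 ≠ 0 := fun h => hnd (h ▸ dvd_zero _)
  rw [hfac, padicValInt.mul hm hne, hvm, padicValInt.eq_zero_of_not_dvd hnd]

/-- Reduction from `p^r` to `p` for the valuation condition: for a prime `p`, `r ≥ 1`
and `m ≠ 0`: if `p ∤ m` then `ν_p(m^{p^r} - m) = ν_p(m^p - m)`; if `p ∥ m` (i.e. `p ∣ m`
but `p² ∤ m`) then both valuations equal `1`; and for square-free `m` the condition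
`ν_p(m^{p^r} - m) = 1` is equivalent to `ν_p(m^p - m) = 1`, independently of `r`. -/
theorem padicValInt_pow_prime_reduction
    (p : ℕ) (hp : p.Prime) (r : ℕ) (hr : 1 ≤ r) (m : ℤ) (hm : m ≠ 0) :
    ((¬ (p : ℤ) ∣ m) →
        padicValInt p (m ^ (p ^ r) - m) = padicValInt p (m ^ p - m)) ∧
    (((p : ℤ) ∣ m ∧ ¬ (p : ℤ) ^ 2 ∣ m) →
        padicValInt p (m ^ (p ^ r) - m) = 1 ∧ padicValInt p (m ^ p - m) = 1) ∧
    (Squarefree m →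
        (padicValInt p (m ^ (p ^ r) - m) = 1 ↔ padicValInt p (m ^ p - m) = 1)) := by
  haveI : Fact p.Prime := ⟨hp⟩
  have hp2 : 2 ≤ p := hp.two_le
  have hpr2 : 2 ≤ p ^ r := le_trans hp2 (Nat.le_self_pow (by omega) p)
  have part1 : (¬ (p : ℤ) ∣ m) →
      padicValInt p (m ^ (p ^ r) - m) = padicValInt p (m ^ p - m) := by
    intro hpm
    have h1 := step_val p r hr m hm hpm
    have h2 := step_val p 1 le_rfl m hm hpm
    rw [pow_one] at h2
    rw [h1, h2]
  have part2 : ((p : ℤ) ∣ m ∧ ¬ (p : ℤ) ^ 2 ∣ m) →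
      padicValInt p (m ^ (p ^ r) - m) = 1 ∧ padicValInt p (m ^ p - m) = 1 := by
    rintro ⟨h1, h2⟩
    exact ⟨ram_val p (p ^ r) hpr2 m hm h1 h2, ram_val p p hp2 m hm h1 h2⟩
  refine ⟨part1, part2, fun hsq => ?_⟩
  by_cases hpm : (p : ℤ) ∣ m
  · have hns : ¬ (p : ℤ) ^ 2 ∣ m := by
      intro h
      have := hsq (p : ℤ) (by rwa [← sq])
      rw [Int.isUnit_iff] at this
      omega
    obtain ⟨e1, e2⟩ := part2 ⟨hpm, hns⟩
    rw [e1, e2]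
  · rw [part1 hpm]
end

section
/- Fix an integer n ≥ 2. The set of square-free positive integers m such that m^p ≢ m (mod p²) for every prime p dividing n has natural density (1/ζ(2)) · ∏_{p | n} p/(p+1), where the product is over primes p dividing n. -/
open Filter

/-- `natDensity E c`: the set `E` of positive integers has natural density `c`,
i.e. `#{m ∈ E : 1 ≤ m ≤ X}/X → c` as `X → ∞`. -/
def natDensity (E : Set ℕ) (c : ℝ) : Prop :=
  Tendsto (fun X : ℕ => (Nat.card {m : ℕ | 1 ≤ m ∧ m ≤ X ∧ m ∈ E} : ℝ) / X)
    atTop (nhds c)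

/-!
Let `P` be the set of primes dividing `n` and `E` the set of `m` with `m ^ p ≢ m (mod p²)` for
all `p ∈ P`. Since `[m squarefree] = ∑_{d² ∣ m} μ(d)`, the number of squarefree `m ≤ X` in `E`
is `∑_d μ(d) · #{m ≤ X : d² ∣ m, m ∈ E}`, and the `d`-th term is at most `X / d²`; by dominated
convergence the density is `∑_d μ(d) ρ(d)`, where `ρ(d)` is the density of `{m ∈ E : d² ∣ m}`.
If some `p ∈ P` divides `d` this set is empty, since `p² ∣ m` forces `m ^ p ≡ m`. Otherwise, by
the Chinese remainder theorem, `ρ(d) = d⁻² ∏_{p ∈ P} (1 - 1/p)`: modulo `p²` the power `x ^ p`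
only depends on `x mod p`, so `x ^ p = x` has exactly one solution above each residue modulo
`p`. Finally `∑_{(d, P) = 1} μ(d)/d² = ζ(2)⁻¹ ∏_{p ∈ P} (1 - p⁻²)⁻¹`.
-/

open Finset ArithmeticFunction
open scoped ArithmeticFunction.Moebius

section Density

lemma natDensity_iff (E : Set ℕ) [DecidablePred (· ∈ E)] (c : ℝ) :
    natDensity E c ↔ Tendsto (fun X : ℕ => (#{m ∈ Icc 1 X | m ∈ E} : ℝ) / X) atTop (nhds c) := by
  have (X : ℕ) : {m : ℕ | 1 ≤ m ∧ m ≤ X ∧ m ∈ E} = ↑({m ∈ Icc 1 X | m ∈ E} : Finset ℕ) := by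
    ext m; simp [and_assoc]
  simp only [natDensity, this, Nat.card_coe_set_eq, Set.ncard_coe_finset]

lemma natDensity_empty : natDensity ∅ 0 := by
  simp [natDensity]

lemma tendsto_div_of_abs_sub_mul_le {a : ℕ → ℝ} {L C : ℝ} (h : ∀ X : ℕ, |a X - X * L| ≤ C) :
    Tendsto (fun X : ℕ => a X / X) atTop (nhds L) := by
  rw [tendsto_iff_norm_sub_tendsto_zero]
  refine squeeze_zero' (Eventually.of_forall fun _ => norm_nonneg _) ?_
    (tendsto_const_div_atTop_nhds_zero_nat C)
  filter_upwards [eventually_gt_atTop 0] with X hX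
  have hX' : (0 : ℝ) < X := Nat.cast_pos.2 hX
  rw [Real.norm_eq_abs, show a X / X - L = (a X - X * L) / X by field_simp, abs_div,
    abs_of_pos hX']
  exact div_le_div_of_nonneg_right (h X) hX'.le

section Periodic

variable {S : ℕ → Prop} [DecidablePred S] {q : ℕ}

lemma card_filter_Ico_add_mul_of_periodic (hS : Function.Periodic S q) (n t : ℕ) :
    #{m ∈ Ico n (n + q * t) | S m} = t * Nat.count S q := by
  induction t with
  | zero => simp
  | succ t ih =>
    rw [mul_add_one, ← add_assoc, ← Ico_union_Ico_eq_Ico (Nat.le_add_right _ _)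
      (Nat.le_add_right _ _), filter_union, card_union_of_disjoint
      (disjoint_filter_filter (Ico_disjoint_Ico_consecutive _ _ _)), ih,
      Nat.filter_Ico_card_eq_of_periodic _ _ _ hS, add_one_mul]

lemma abs_card_filter_Icc_sub_le_of_periodic (hq : 0 < q) (hS : Function.Periodic S q) (X : ℕ) :
    |(#{m ∈ Icc 1 X | S m} : ℝ) - X * (Nat.count S q / q)| ≤ Nat.count S q := by
  have hmono {a b : ℕ} (hab : a ≤ b) : #{m ∈ Ico 1 a | S m} ≤ #{m ∈ Ico 1 b | S m} :=
    card_le_card (filter_subset_filter _ (Ico_subset_Ico_right hab))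
  have hqX := Nat.mul_div_le X q
  have hXq := Nat.lt_mul_div_succ X hq
  have hlower := hmono (a := 1 + q * (X / q)) (b := X + 1) (by omega)
  have hupper := hmono (a := X + 1) (b := 1 + q * (X / q + 1)) (by omega)
  rw [card_filter_Ico_add_mul_of_periodic hS, Ico_add_one_right_eq_Icc] at hlower hupper
  have hq' : (0 : ℝ) < q := Nat.cast_pos.2 hq
  have htX : ((X / q : ℕ) : ℝ) * q ≤ X := by exact_mod_cast Nat.div_mul_le_self X q
  have hXt : (X : ℝ) < ((X / q : ℕ) + 1) * q := by
    rw [mul_comm]; exact_mod_cast hXq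
  have hc : (0 : ℝ) ≤ Nat.count S q := Nat.cast_nonneg _
  have hlower' : ((X / q : ℕ) : ℝ) * Nat.count S q ≤ #{m ∈ Icc 1 X | S m} := by
    exact_mod_cast hlower
  have hupper' : (#{m ∈ Icc 1 X | S m} : ℝ) ≤ ((X / q : ℕ) + 1) * Nat.count S q := by
    exact_mod_cast hupper
  have hr₁ : ((X / q : ℕ) : ℝ) * Nat.count S q ≤ X * (Nat.count S q / q) := by
    rw [mul_div_assoc', le_div_iff₀ hq']; nlinarith
  have hr₂ : X * ((Nat.count S q : ℝ) / q) ≤ ((X / q : ℕ) + 1) * Nat.count S q := by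
    rw [mul_div_assoc', div_le_iff₀ hq']; nlinarith
  rw [abs_le]
  constructor <;> linarith

theorem natDensity_of_periodic (hq : 0 < q) (hS : Function.Periodic S q) :
    natDensity {m | S m} (Nat.count S q / q) :=
  (natDensity_iff _ _).2
    (tendsto_div_of_abs_sub_mul_le (abs_card_filter_Icc_sub_le_of_periodic hq hS))

end Periodic

theorem natDensity_zmod (q : ℕ) [NeZero q] (T : ZMod q → Prop) [DecidablePred T] :
    natDensity {m | T m} (#{x | T x} / q) := by
  have hperiodic : Function.Periodic (fun m : ℕ => T m) q := fun m => by simp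
  have hcount : Nat.count (fun m : ℕ => T m) q = #{x | T x} := by
    rw [Nat.count_eq_card_filter_range]
    refine card_nbij' (fun k => (k : ZMod q)) ZMod.val ?_ ?_ ?_ ?_
    · intro k hk; simpa using (mem_filter.1 hk).2
    · intro x hx; simpa [ZMod.val_lt] using (mem_filter.1 hx).2
    · intro k hk; exact ZMod.val_cast_of_lt (mem_range.1 (mem_filter.1 hk).1)
    · intro x _; exact ZMod.natCast_zmod_val x
  simpa [hcount] using natDensity_of_periodic (NeZero.pos q) hperiodic

end Density

section SquarefreeSieve

lemma sq_dvd_sq_mul_iff {a b d : ℕ} (ha : Squarefree a) (hb : b ≠ 0) :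
    d ^ 2 ∣ b ^ 2 * a ↔ d ∣ b := by
  refine ⟨fun h => ?_, fun h => (pow_dvd_pow_of_dvd h 2).mul_right a⟩
  have ha₀ := ha.ne_zero
  have hd : d ≠ 0 := by rintro rfl; simp_all
  rw [← Nat.factorization_le_iff_dvd hd hb]
  intro r
  have hr := (Nat.factorization_le_iff_dvd (by positivity) (by positivity)).2 h r
  have ha₁ := (Nat.squarefree_iff_factorization_le_one ha₀).1 ha r
  simp only [Nat.factorization_mul (pow_ne_zero 2 hb) ha₀, Nat.factorization_pow,
    Finsupp.add_apply, Finsupp.smul_apply, smul_eq_mul] at hr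
  omega

lemma sum_moebius_divisors (n : ℕ) : ∑ d ∈ n.divisors, μ d = if n = 1 then 1 else 0 := by
  rw [← coe_mul_zeta_apply, moebius_mul_coe_zeta, one_apply]

lemma sum_moebius_filter_sq_dvd {m : ℕ} (hm : m ≠ 0) :
    ∑ d ∈ m.divisors with d ^ 2 ∣ m, μ d = if Squarefree m then 1 else 0 := by
  obtain ⟨a, b, -, hb, rfl, ha⟩ := Nat.sq_mul_squarefree_of_pos (Nat.pos_of_ne_zero hm)
  have hdiv : {d ∈ (b ^ 2 * a).divisors | d ^ 2 ∣ b ^ 2 * a} = b.divisors := by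
    ext d
    simp only [mem_filter, Nat.mem_divisors, sq_dvd_sq_mul_iff ha hb.ne']
    exact ⟨fun h => ⟨h.2, hb.ne'⟩, fun h => ⟨⟨(h.1.trans (dvd_pow_self b two_ne_zero)).mul_right a,
      hm⟩, h.1⟩⟩
  have hsf : Squarefree (b ^ 2 * a) ↔ b = 1 := by
    refine ⟨fun h => Nat.isUnit_iff.1 (h b ⟨a, by ring⟩), ?_⟩
    rintro rfl
    simpa using ha
  simp only [hdiv, sum_moebius_divisors, hsf]

variable (E : Set ℕ) [DecidablePred (· ∈ E)]

lemma card_filter_sq_dvd_le (d X : ℕ) : #{m ∈ Icc 1 X | d ^ 2 ∣ m ∧ m ∈ E} ≤ X / d ^ 2 := by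
  rw [← Nat.Ioc_filter_dvd_card_eq_div, ← Icc_add_one_left_eq_Ioc, zero_add]
  exact card_le_card fun m => by simp +contextual

lemma sum_moebius_sq_dvd_range {m X : ℕ} (hm : m ∈ Icc 1 X) :
    ∑ d ∈ range (X + 1), (if d ^ 2 ∣ m ∧ m ∈ E then μ d else 0) =
      if Squarefree m ∧ m ∈ E then 1 else 0 := by
  obtain ⟨hm₁, hmX⟩ := mem_Icc.1 hm
  by_cases hE : m ∈ E
  · simp only [hE, and_true]
    rw [← sum_filter, ← sum_moebius_filter_sq_dvd (by omega)]
    congr 1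
    ext d
    simp only [mem_filter, mem_range, Nat.mem_divisors]
    refine ⟨fun h => ⟨⟨(dvd_pow_self d two_ne_zero).trans h.2, by omega⟩, h.2⟩, fun h => ⟨?_, h.2⟩⟩
    have := Nat.le_of_dvd (by omega) h.1.1
    omega
  · simp [hE]

lemma card_filter_squarefree_eq_sum (X : ℕ) :
    (#{m ∈ Icc 1 X | Squarefree m ∧ m ∈ E} : ℤ) =
      ∑ d ∈ range (X + 1), μ d * #{m ∈ Icc 1 X | d ^ 2 ∣ m ∧ m ∈ E} := by
  calc (#{m ∈ Icc 1 X | Squarefree m ∧ m ∈ E} : ℤ)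
      = ∑ m ∈ Icc 1 X, ∑ d ∈ range (X + 1), if d ^ 2 ∣ m ∧ m ∈ E then μ d else 0 := by
        rw [natCast_card_filter]
        exact sum_congr rfl fun m hm => (sum_moebius_sq_dvd_range E hm).symm
    _ = ∑ d ∈ range (X + 1), μ d * #{m ∈ Icc 1 X | d ^ 2 ∣ m ∧ m ∈ E} := by
        rw [sum_comm]
        refine sum_congr rfl fun d _ => ?_
        rw [← sum_filter, sum_const, nsmul_eq_mul, mul_comm]

variable {E}

lemma abs_moebius_mul_card_div_le (d X : ℕ) :
    |(μ d : ℝ) * (#{m ∈ Icc 1 X | d ^ 2 ∣ m ∧ m ∈ E} / X)| ≤ 1 / d ^ 2 := by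
  rcases Nat.eq_zero_or_pos d with rfl | hd
  · simp
  have hμ : |(μ d : ℝ)| ≤ 1 := by exact_mod_cast abs_moebius_le_one
  have hcard : (#{m ∈ Icc 1 X | d ^ 2 ∣ m ∧ m ∈ E} : ℝ) ≤ X / d ^ 2 :=
    (Nat.cast_le.2 (card_filter_sq_dvd_le E d X)).trans (by exact_mod_cast Nat.cast_div_le)
  have hdiv : (#{m ∈ Icc 1 X | d ^ 2 ∣ m ∧ m ∈ E} : ℝ) / X ≤ 1 / d ^ 2 := by
    rcases Nat.eq_zero_or_pos X with rfl | hX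
    · simp
    · rw [div_le_iff₀ (by positivity)]
      calc _ ≤ (X : ℝ) / d ^ 2 := hcard
        _ = 1 / d ^ 2 * X := by ring
  rw [abs_mul, abs_of_nonneg (by positivity : (0 : ℝ) ≤ #{m ∈ Icc 1 X | d ^ 2 ∣ m ∧ m ∈ E} / X)]
  exact (mul_le_of_le_one_left (by positivity) hμ).trans hdiv

lemma card_filter_squarefree_div_eq_tsum (X : ℕ) :
    (#{m ∈ Icc 1 X | Squarefree m ∧ m ∈ E} : ℝ) / X =
      ∑' d, (μ d : ℝ) * (#{m ∈ Icc 1 X | d ^ 2 ∣ m ∧ m ∈ E} / X) := by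
  rw [tsum_eq_sum (s := range (X + 1)), ← Int.cast_natCast, card_filter_squarefree_eq_sum]
  · push_cast
    simp only [sum_div, mul_div_assoc]
  · intro d hd
    have hXd : X < d ^ 2 := by
      have := mem_range.not.1 hd
      nlinarith
    rw [Nat.le_zero.1 ((card_filter_sq_dvd_le E d X).trans (Nat.div_eq_of_lt hXd).le)]
    simp

theorem natDensity_squarefree_inter {ρ : ℕ → ℝ}
    (hρ : ∀ d, 0 < d → natDensity {m | d ^ 2 ∣ m ∧ m ∈ E} (ρ d)) :
    natDensity {m | Squarefree m ∧ m ∈ E} (∑' d, μ d * ρ d) := by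
  rw [natDensity_iff]
  simp only [Set.mem_ofPred_eq, card_filter_squarefree_div_eq_tsum]
  refine tendsto_tsum_of_dominated_convergence (bound := fun d : ℕ => 1 / (d : ℝ) ^ 2)
    (Real.summable_one_div_nat_pow.2 one_lt_two) (fun d => ?_)
    (Eventually.of_forall fun X d => abs_moebius_mul_card_div_le d X)
  rcases Nat.eq_zero_or_pos d with rfl | hd
  · simp
  · exact ((natDensity_iff _ _).1 (hρ d hd)).const_mul _

end SquarefreeSieve

section MoebiusSeries

lemma tsum_moebius_div_sq : ∑' d : ℕ, (μ d : ℝ) / d ^ 2 = 6 / Real.pi ^ 2 := by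
  have h2 : (1 : ℝ) < (2 : ℂ).re := by norm_num
  have hL : LSeries (fun n => (μ n : ℂ)) 2 = 6 / (Real.pi : ℂ) ^ 2 := by
    have := LSeries_zeta_mul_Lseries_moebius h2
    rw [LSeries_zeta_eq_riemannZeta h2, riemannZeta_two] at this
    have hπ : (Real.pi : ℂ) ≠ 0 := Complex.ofReal_ne_zero.2 Real.pi_ne_zero
    field_simp at this
    rw [eq_div_iff (pow_ne_zero 2 hπ)]
    linear_combination this
  apply Complex.ofReal_injective
  rw [Complex.ofReal_tsum]
  push_cast
  rw [← hL, LSeries_def₀ (by simp)]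
  exact tsum_congr fun n => by norm_cast

lemma abs_moebius_div_sq_le (d : ℕ) : |(μ d : ℝ) / d ^ 2| ≤ 1 / d ^ 2 := by
  rw [abs_div, abs_of_nonneg (by positivity : (0 : ℝ) ≤ (d : ℝ) ^ 2)]
  gcongr
  exact_mod_cast abs_moebius_le_one

lemma summable_coprime_moebius_div_sq (N : ℕ) :
    Summable fun d : ℕ => if d.Coprime N then (μ d : ℝ) / d ^ 2 else 0 := by
  refine .of_norm_bounded (Real.summable_one_div_nat_pow.2 one_lt_two) fun d => ?_
  split_ifs
  · exact abs_moebius_div_sq_le d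
  · simp

lemma tsum_coprime_moebius_div_sq_eq_mul {p N : ℕ} (hp : p.Prime) (hpN : ¬ p ∣ N) :
    ∑' d : ℕ, (if d.Coprime N then (μ d : ℝ) / d ^ 2 else 0) =
      (1 - 1 / (p : ℝ) ^ 2) * ∑' d : ℕ, if d.Coprime (p * N) then (μ d : ℝ) / d ^ 2 else 0 := by
  set g : ℕ → ℕ → ℝ := fun N d => if d.Coprime N then (μ d : ℝ) / d ^ 2 else 0
  have hcop {d : ℕ} (hpd : ¬ p ∣ d) : d.Coprime (p * N) ↔ d.Coprime N := by
    rw [Nat.coprime_mul_iff_right, Nat.coprime_comm, hp.coprime_iff_not_dvd]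
    exact and_iff_right hpd
  have hncop {d : ℕ} (hpd : p ∣ d) : g (p * N) d = 0 := if_neg fun h =>
    hp.ne_one ((Nat.coprime_self _).1 (Nat.coprime_mul_iff_right.1 (h.coprime_dvd_left hpd)).1)
  have hsupp : (fun d => g N d - g (p * N) d).support ⊆ Set.range (p * ·) := by
    intro d hd
    by_cases hpd : p ∣ d
    · exact hpd.imp fun _ hk => hk.symm
    · exact absurd (by simp [g, hcop hpd]) hd
  have hmul (k : ℕ) : g N (p * k) = -(1 / p ^ 2) * g (p * N) k := by
    by_cases hpk : p ∣ k
    · have : μ (p * k) = 0 := moebius_eq_zero_of_not_squarefree fun h =>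
        hp.ne_one (Nat.isUnit_iff.1 (h p (mul_dvd_mul_left p hpk)))
      simp [g, this, hncop hpk]
    · have hμ : μ (p * k) = -μ k := by
        rw [isMultiplicative_moebius.map_mul_of_coprime ((hp.coprime_iff_not_dvd).2 hpk),
          moebius_apply_prime hp, neg_one_mul]
      have hcop' : (p * k).Coprime N ↔ k.Coprime N := by
        rw [Nat.coprime_mul_iff_left, hp.coprime_iff_not_dvd]
        exact and_iff_right hpN
      simp only [g, hcop', hcop hpk, hμ]
      split_ifs <;> push_cast <;> ring
  calc ∑' d, g N d = ∑' d, g (p * N) d + ∑' d, (g N d - g (p * N) d) := by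
        rw [Summable.tsum_sub (summable_coprime_moebius_div_sq N)
          (summable_coprime_moebius_div_sq _)]
        ring
    _ = ∑' d, g (p * N) d + ∑' k, -(1 / p ^ 2) * g (p * N) k := by
        rw [← (mul_right_injective₀ hp.ne_zero).tsum_eq hsupp]
        simp [hmul, hncop (dvd_mul_right p _)]
    _ = (1 - 1 / p ^ 2) * ∑' d, g (p * N) d := by
        rw [tsum_mul_left]; ring

lemma prod_mul_tsum_coprime_moebius_div_sq (P : Finset ℕ) (hP : ∀ p ∈ P, p.Prime) :
    (∏ p ∈ P, (1 - 1 / (p : ℝ) ^ 2)) *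
      ∑' d : ℕ, (if d.Coprime (∏ p ∈ P, p) then (μ d : ℝ) / d ^ 2 else 0) = 6 / Real.pi ^ 2 := by
  induction P using Finset.induction_on with
  | empty => simpa using tsum_moebius_div_sq
  | insert p P hp ih =>
    have hpP : ¬ p ∣ ∏ q ∈ P, q := fun h => by
      obtain ⟨q, hq, hpq⟩ := (Prime.dvd_finsetProd_iff (hP p (mem_insert_self p P)).prime _).1 h
      exact hp ((Nat.prime_dvd_prime_iff_eq (hP p (mem_insert_self p P))
        (hP q (mem_insert_of_mem hq))).1 hpq ▸ hq)
    rw [prod_insert hp, prod_insert hp, ← ih fun q hq => hP q (mem_insert_of_mem hq),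
      tsum_coprime_moebius_div_sq_eq_mul (hP p (mem_insert_self p P)) hpP]
    ring

lemma tsum_moebius_mul_ite_coprime {P : Finset ℕ} (hP : ∀ p ∈ P, p.Prime) :
    ∑' d : ℕ, (μ d : ℝ) *
      (if d.Coprime (∏ p ∈ P, p) then (∏ p ∈ P, (1 - 1 / (p : ℝ))) / d ^ 2 else 0) =
      6 / Real.pi ^ 2 * ∏ p ∈ P, (p : ℝ) / (p + 1) := by
  have hfactor : ∏ p ∈ P, (1 - 1 / (p : ℝ)) =
      (∏ p ∈ P, (p : ℝ) / (p + 1)) * ∏ p ∈ P, (1 - 1 / (p : ℝ) ^ 2) := by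
    rw [← prod_mul_distrib]
    refine prod_congr rfl fun p hp => ?_
    have : (p : ℝ) ≠ 0 := Nat.cast_ne_zero.2 (hP p hp).ne_zero
    field_simp
    ring
  have hterm (d : ℕ) : (μ d : ℝ) *
      (if d.Coprime (∏ p ∈ P, p) then (∏ p ∈ P, (1 - 1 / (p : ℝ))) / d ^ 2 else 0) =
      (∏ p ∈ P, (1 - 1 / (p : ℝ))) * if d.Coprime (∏ p ∈ P, p) then (μ d : ℝ) / d ^ 2 else 0 := by
    split_ifs <;> ring
  rw [← prod_mul_tsum_coprime_moebius_div_sq P hP, tsum_congr hterm, tsum_mul_left, hfactor]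
  ring

end MoebiusSeries

section LocalCount

variable {p : ℕ} [Fact p.Prime]

lemma pow_eq_pow_of_castHom_eq {x y : ZMod (p ^ 2)}
    (h : ZMod.castHom (dvd_pow_self p two_ne_zero) (ZMod p) x =
      ZMod.castHom (dvd_pow_self p two_ne_zero) (ZMod p) y) :
    x ^ p = y ^ p := by
  obtain ⟨a, rfl⟩ := ZMod.intCast_surjective x
  obtain ⟨b, rfl⟩ := ZMod.intCast_surjective y
  simp only [map_intCast, ZMod.intCast_eq_intCast_iff_dvd_sub] at h
  have := dvd_sub_pow_of_dvd_sub h 1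
  rw [← Int.cast_pow, ← Int.cast_pow, ZMod.intCast_eq_intCast_iff_dvd_sub]
  simpa using this

lemma card_filter_pow_eq_self : #{y : ZMod (p ^ 2) | y ^ p = y} = p := by
  set Ψ := ZMod.castHom (dvd_pow_self p two_ne_zero) (ZMod p)
  have hΨ (r : ZMod p) : Ψ r.val = r := by rw [map_natCast, ZMod.natCast_zmod_val]
  have hfix (r : ZMod p) : ((r.val : ZMod (p ^ 2)) ^ p) ^ p = (r.val : ZMod (p ^ 2)) ^ p :=
    pow_eq_pow_of_castHom_eq (by rw [map_pow, hΨ, ZMod.pow_card])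
  refine (card_nbij' (t := univ) Ψ (fun r => (r.val : ZMod (p ^ 2)) ^ p) (fun _ _ => mem_univ _)
    (fun r _ => mem_filter.2 ⟨mem_univ _, hfix r⟩) (fun y hy => ?_) (fun r _ => ?_)).trans
    (by simp)
  · exact (pow_eq_pow_of_castHom_eq (hΨ (Ψ y))).trans (mem_filter.1 hy).2
  · simp only [map_pow, hΨ, ZMod.pow_card]

lemma card_filter_pow_ne_self : #{y : ZMod (p ^ 2) | y ^ p ≠ y} = p ^ 2 - p := by
  have := card_filter_add_card_filter_not (s := univ) (fun y : ZMod (p ^ 2) => y ^ p = y)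
  rw [card_filter_pow_eq_self, card_univ, ZMod.card] at this
  have := Nat.le_self_pow two_ne_zero p
  simp only [ne_eq]
  omega

end LocalCount

section ChineseRemainder

open scoped Function in
lemma card_filter_forall_castHom {ι : Type*} [Fintype ι] [DecidableEq ι] (a : ι → ℕ)
    [∀ i, NeZero (a i)] [NeZero (∏ i, a i)] (coprime : Pairwise (Nat.Coprime on a))
    (T : ∀ i, ZMod (a i) → Prop) [∀ i, DecidablePred (T i)] :
    #{x : ZMod (∏ i, a i) | ∀ i, T i (ZMod.castHom (dvd_prod_of_mem a (mem_univ i)) _ x)} =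
      ∏ i, #{z | T i z} := by
  rw [card_equiv (ZMod.prodEquivPi a coprime).toEquiv (t := Fintype.piFinset fun i => {z | T i z})
    (fun x => by rw [mem_filter]; simp), Fintype.card_piFinset]

lemma card_filter_chineseRemainder_fst_eq_zero_and {m n : ℕ} [NeZero m] [NeZero n]
    (h : m.Coprime n) (G : ZMod n → Prop) [DecidablePred G] :
    #{x : ZMod (m * n) | (ZMod.chineseRemainder h x).1 = 0 ∧ G (ZMod.chineseRemainder h x).2} =
      #{y | G y} := by
  rw [card_equiv (ZMod.chineseRemainder h).toEquiv (t := {0} ×ˢ ({y | G y} : Finset _))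
    (fun x => by simp only [mem_filter, mem_product, mem_singleton, mem_univ, true_and]; rfl),
    card_product, card_singleton, one_mul]

end ChineseRemainder

section GoodResidues

variable {P : Finset ℕ} {d : ℕ}

open scoped Function in
lemma natDensity_sq_dvd_and_not_modEq (hP : ∀ p ∈ P, p.Prime) (hd : 0 < d)
    (hdP : d.Coprime (∏ p ∈ P, p)) :
    natDensity {m | d ^ 2 ∣ m ∧ ∀ p ∈ P, ¬ m ^ p ≡ m [MOD p ^ 2]}
      ((∏ p ∈ P, (1 - 1 / (p : ℝ))) / d ^ 2) := by
  have (p : P) : Fact (p : ℕ).Prime := ⟨hP p p.2⟩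
  set Q := ∏ p : P, (p : ℕ) ^ 2
  have : NeZero Q := ⟨prod_ne_zero_iff.2 fun p _ => pow_ne_zero 2 (hP p p.2).ne_zero⟩
  have : NeZero (d ^ 2) := ⟨pow_ne_zero 2 hd.ne'⟩
  have hcop : Pairwise (Nat.Coprime on fun p : P => (p : ℕ) ^ 2) := fun p q hpq =>
    Nat.Coprime.pow 2 2 ((Nat.coprime_primes (hP p p.2) (hP q q.2)).2 (Subtype.coe_ne_coe.2 hpq))
  have hdQ : (d ^ 2).Coprime Q := Nat.Coprime.pow_left 2 (Nat.Coprime.prod_right fun p _ =>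
    Nat.Coprime.pow_right 2 (hdP.coprime_dvd_right (dvd_prod_of_mem (fun q : ℕ => q) p.2)))
  set G : ZMod Q → Prop := fun y => ∀ p : P,
    ¬ (ZMod.castHom (dvd_prod_of_mem _ (mem_univ p)) (ZMod ((p : ℕ) ^ 2)) y) ^ (p : ℕ) =
      ZMod.castHom (dvd_prod_of_mem _ (mem_univ p)) (ZMod ((p : ℕ) ^ 2)) y
  have hG : (#{y | G y} : ℝ) / Q = ∏ p ∈ P, (1 - 1 / (p : ℝ)) := by
    simp only [G, Q, card_filter_forall_castHom _ hcop (fun p z => ¬ z ^ (p : ℕ) = z), ← ne_eq,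
      card_filter_pow_ne_self]
    push_cast [Nat.cast_sub (Nat.le_self_pow two_ne_zero _)]
    rw [← prod_div_distrib, ← prod_coe_sort P]
    refine prod_congr rfl fun p _ => ?_
    have : (p : ℝ) ≠ 0 := Nat.cast_ne_zero.2 (hP p p.2).ne_zero
    field_simp
  have hGm (m : ℕ) : G m ↔ ∀ p ∈ P, ¬ m ^ p ≡ m [MOD p ^ 2] := by
    simp only [G, map_natCast, ← Nat.cast_pow, ZMod.natCast_eq_natCast_iff, Subtype.forall]
  have key := natDensity_zmod (d ^ 2 * Q)
    (fun x => (ZMod.chineseRemainder hdQ x).1 = 0 ∧ G (ZMod.chineseRemainder hdQ x).2)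
  rw [card_filter_chineseRemainder_fst_eq_zero_and] at key
  convert key using 1
  · ext m
    simp [ZMod.natCast_eq_zero_iff, hGm]
  · rw [← hG]
    push_cast
    field_simp

lemma natDensity_sq_dvd_and_not_modEq_of_not_coprime (hP : ∀ p ∈ P, p.Prime)
    (hdP : ¬ d.Coprime (∏ p ∈ P, p)) :
    natDensity {m | d ^ 2 ∣ m ∧ ∀ p ∈ P, ¬ m ^ p ≡ m [MOD p ^ 2]} 0 := by
  obtain ⟨p, hp, hpd⟩ : ∃ p ∈ P, p ∣ d := by
    by_contra! h
    exact hdP (Nat.coprime_prod_right_iff.2 fun p hp =>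
      Nat.coprime_comm.1 ((hP p hp).coprime_iff_not_dvd.2 (h p hp)))
  convert natDensity_empty
  refine Set.eq_empty_of_forall_notMem fun m ⟨hdm, hgood⟩ => hgood p hp ?_
  have hpm : p ^ 2 ∣ m := (pow_dvd_pow_of_dvd hpd 2).trans hdm
  exact (Nat.modEq_zero_iff_dvd.2 (hpm.trans (dvd_pow_self m (hP p hp).ne_zero))).trans
    (Nat.modEq_zero_iff_dvd.2 hpm).symm

end GoodResidues

theorem squarefree_good_for_all_primes_dividing_density_general
    (n : ℕ) :
    natDensity {m : ℕ | Squarefree m ∧ ∀ p ∈ n.primeFactors, ¬ m ^ p ≡ m [MOD p ^ 2]}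
      ((6 / Real.pi ^ 2) * ∏ p ∈ n.primeFactors, (p : ℝ) / ((p : ℝ) + 1)) := by
  classical
  have hP : ∀ p ∈ n.primeFactors, p.Prime := fun p hp => Nat.prime_of_mem_primeFactors hp
  rw [← tsum_moebius_mul_ite_coprime hP]
  refine natDensity_squarefree_inter
    (E := {m | ∀ p ∈ n.primeFactors, ¬ m ^ p ≡ m [MOD p ^ 2]}) fun d hd => ?_
  split_ifs with hdP
  · exact natDensity_sq_dvd_and_not_modEq hP hd hdP
  · exact natDensity_sq_dvd_and_not_modEq_of_not_coprime hP hdP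

/-- For fixed `n ≥ 2`, the square-free positive integers `m` with `m^p ≢ m (mod p²)`
for every prime `p ∣ n` have natural density `(6/π²)·∏_{p ∣ n} p/(p+1)`. -/
theorem squarefree_good_for_all_primes_dividing_density
    (n : ℕ) (hn : 2 ≤ n) :
    natDensity {m : ℕ | Squarefree m ∧ ∀ p ∈ n.primeFactors, ¬ m ^ p ≡ m [MOD p ^ 2]}
      ((6 / Real.pi ^ 2) * ∏ p ∈ n.primeFactors, (p : ℝ) / ((p : ℝ) + 1)) :=
  squarefree_good_for_all_primes_dividing_density_general n
end
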